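/- arXiv:1811.07085 — 5 statements merged into one kernel-verified Lean document; each statement's English description precedes it below -/
import Mathlib

section
/- Let Γ be a discrete group, K a finite subset of Γ, and c > 0. If K is a groupoid-Kazhdan set with constant c, then (K, c) is a Kazhdan pair for Γ, i.e. K is a Kazhdan set for Γ in the classical group sense with the same constant c. (This is one direction of the proposition that a finite subset of a discrete group is a group Kazhdan set if and only if it is a groupoid Kazhdan set.) -/
open scoped InnerProductSpace

noncomputable section

/-- A classical Kazhdan pair for a discrete group `Γ`: every unitary representation
admitting a `(Q, c)`-almost-invariant unit vector has a nonzero invariant vector. -/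
def IsKazhdanPair (Γ : Type) [Group Γ] (Q : Set Γ) (c : ℝ) : Prop :=
  ∀ (H : Type) [NormedAddCommGroup H] [InnerProductSpace ℂ H] [CompleteSpace H]
    (u : Γ →* unitary (H →L[ℂ] H)),
    (∃ ξ : H, ‖ξ‖ = 1 ∧ ∀ g ∈ Q, ‖(u g : H →L[ℂ] H) ξ - ξ‖ < c) →
    ∃ η : H, η ≠ 0 ∧ ∀ g : Γ, (u g : H →L[ℂ] H) η = η

/-- A groupoid-Kazhdan set with constant `c`: for every unitary representation and every
vector `ξ` orthogonal to the invariant vectors there is a finitely supported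
`f : Γ → ℂ` supported in `K` with `ℓ¹`-norm at most one such that
`‖Σ_g f(g) u_g ξ − (Σ_g f(g)) ξ‖ ≥ c ‖ξ‖`. -/
def IsGroupoidKazhdanSet (Γ : Type) [Group Γ] (K : Set Γ) (c : ℝ) : Prop :=
  ∀ (H : Type) [NormedAddCommGroup H] [InnerProductSpace ℂ H] [CompleteSpace H]
    (u : Γ →* unitary (H →L[ℂ] H)) (ξ : H),
    (∀ η : H, (∀ g : Γ, (u g : H →L[ℂ] H) η = η) → (inner ℂ η ξ : ℂ) = 0) →
    ∃ f : Γ →₀ ℂ,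
      (f.support : Set Γ) ⊆ K ∧ (∑ g ∈ f.support, ‖f g‖) ≤ 1 ∧
      c * ‖ξ‖ ≤ ‖(∑ g ∈ f.support, f g • ((u g : H →L[ℂ] H) ξ)) - (∑ g ∈ f.support, f g) • ξ‖

/-! Without nonzero invariant vectors every vector is orthogonal to the invariant ones, so a
groupoid-Kazhdan set yields `f` with defect `‖∑ f g • (u g ξ - ξ)‖ ≥ c` at the almost-invariant unit
vector `ξ`; but a combination with `ℓ¹`-weights at most one of vectors of norm `< c` has norm `< c`. -/

theorem Finsupp.norm_sum_smul_sub_sum_smul_lt {ι 𝕜 E : Type*} [NormedField 𝕜]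
    [SeminormedAddCommGroup E] [NormedSpace 𝕜 E] (f : ι →₀ 𝕜)
    (hf : ∑ i ∈ f.support, ‖f i‖ ≤ 1) (v : ι → E) (ξ : E) {c : ℝ} (hc : 0 < c)
    (hv : ∀ i ∈ f.support, ‖v i - ξ‖ < c) :
    ‖∑ i ∈ f.support, f i • v i - (∑ i ∈ f.support, f i) • ξ‖ < c := by
  have hdefect : ∑ i ∈ f.support, f i • v i - (∑ i ∈ f.support, f i) • ξ =
      ∑ i ∈ f.support, f i • (v i - ξ) := by
    simp only [Finset.sum_smul, ← Finset.sum_sub_distrib, smul_sub]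
  rw [hdefect]
  rcases f.support.eq_empty_or_nonempty with hempty | hne
  · simpa [hempty] using hc
  calc ‖∑ i ∈ f.support, f i • (v i - ξ)‖
      ≤ ∑ i ∈ f.support, ‖f i‖ * ‖v i - ξ‖ := norm_sum_le_of_le _ fun i _ => norm_smul_le _ _
    _ < ∑ i ∈ f.support, ‖f i‖ * c :=
        Finset.sum_lt_sum_of_nonempty hne fun i hi =>
          mul_lt_mul_of_pos_left (hv i hi) (norm_pos_iff.2 (Finsupp.mem_support_iff.1 hi))
    _ = (∑ i ∈ f.support, ‖f i‖) * c := (Finset.sum_mul _ _ _).symm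
    _ ≤ c := mul_le_of_le_one_left hc.le hf

theorem groupoidKazhdanSet_isKazhdanPair_general (Γ : Type) [Group Γ] (K : Set Γ)
    (c : ℝ) (hc : 0 < c) (h : IsGroupoidKazhdanSet Γ K c) :
    IsKazhdanPair Γ K c := by
  intro H _ _ _ u ⟨ξ, hξ_norm, hξ_almost⟩
  by_contra! hno_invariant
  have hξ_perp : ∀ η : H, (∀ g, (u g : H →L[ℂ] H) η = η) → ⟪η, ξ⟫_ℂ = 0 := by
    intro η hη
    obtain rfl : η = 0 := by
      by_contra hη_ne
      obtain ⟨g, hg⟩ := hno_invariant η hη_ne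
      exact hg (hη g)
    exact inner_zero_left ξ
  obtain ⟨f, hf_supp, hf_norm, hf_defect⟩ := h H u ξ hξ_perp
  have hf_small := f.norm_sum_smul_sub_sum_smul_lt hf_norm (fun g => (u g : H →L[ℂ] H) ξ) ξ hc
    fun g hg => hξ_almost g (hf_supp hg)
  rw [hξ_norm, mul_one] at hf_defect
  exact hf_defect.not_gt hf_small

/-- If a finite subset `K` of a discrete group `Γ` is a groupoid-Kazhdan set with constant
`c > 0`, then `(K, c)` is a Kazhdan pair for `Γ` in the classical group sense. -/
theorem groupoidKazhdanSet_isKazhdanPair (Γ : Type) [Group Γ] (K : Set Γ) (hK : K.Finite)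
    (c : ℝ) (hc : 0 < c) (h : IsGroupoidKazhdanSet Γ K c) :
    IsKazhdanPair Γ K c :=
  groupoidKazhdanSet_isKazhdanPair_general Γ K c hc h

end
end

section
/- Let Γ be a discrete group, S a finite subset of Γ, and c > 0. If (S, c) is a Kazhdan pair for Γ in the classical group sense, then S is a groupoid-Kazhdan set with the same constant c. (This is the other direction of the proposition that a finite subset of a discrete group is a group Kazhdan set if and only if it is a groupoid Kazhdan set.) -/
open scoped InnerProductSpace

noncomputable section

/-!
A Kazhdan pair `(S, c)` applies to the restriction of a unitary representation to the
orthogonal complement of its invariant vectors, which has no nonzero invariant vector. Hence no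
nonzero `ξ` in that complement is `(S, c)`-almost invariant after normalisation, i.e.
`c ‖ξ‖ ≤ ‖u_g ξ - ξ‖` for some `g ∈ S`, and the Dirac mass `f = δ_g` is the required witness.
-/

section Restriction

variable {Γ : Type} [Group Γ] {H : Type} [NormedAddCommGroup H] [InnerProductSpace ℂ H]
  [CompleteSpace H] (u : Γ →* unitary (H →L[ℂ] H))

def invariantSubmodule : Submodule ℂ H where
  carrier := {η | ∀ g : Γ, (u g : H →L[ℂ] H) η = η}
  add_mem' ha hb g := by rw [map_add, ha g, hb g]
  zero_mem' _ := map_zero _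
  smul_mem' a _ hx g := by rw [map_smul, hx g]

lemma unitaryRep_mul_apply (g g' : Γ) (x : H) :
    (u (g * g') : H →L[ℂ] H) x = (u g : H →L[ℂ] H) ((u g' : H →L[ℂ] H) x) := by
  rw [map_mul]; rfl

lemma unitaryRep_inv_apply_apply (g : Γ) (x : H) :
    (u g⁻¹ : H →L[ℂ] H) ((u g : H →L[ℂ] H) x) = x := by
  rw [← unitaryRep_mul_apply, inv_mul_cancel, map_one]; rfl

lemma apply_mem_orthogonal_invariantSubmodule (g : Γ) {x : H}
    (hx : x ∈ (invariantSubmodule u)ᗮ) : (u g : H →L[ℂ] H) x ∈ (invariantSubmodule u)ᗮ := by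
  rw [Submodule.mem_orthogonal]
  intro v hv
  calc ⟪v, (u g : H →L[ℂ] H) x⟫_ℂ
      = ⟪(u g : H →L[ℂ] H) v, (u g : H →L[ℂ] H) x⟫_ℂ := by rw [hv g]
    _ = ⟪v, x⟫_ℂ := Unitary.inner_map_map (u g) v x
    _ = 0 := (Submodule.mem_orthogonal _ _).1 hx v hv

def restrictOrthogonalInvariantsEquiv (g : Γ) :
    (invariantSubmodule u)ᗮ ≃ₗᵢ[ℂ] (invariantSubmodule u)ᗮ where
  toFun x := ⟨(u g : H →L[ℂ] H) x, apply_mem_orthogonal_invariantSubmodule u g x.2⟩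
  invFun x := ⟨(u g⁻¹ : H →L[ℂ] H) x, apply_mem_orthogonal_invariantSubmodule u g⁻¹ x.2⟩
  map_add' _ _ := Subtype.ext (map_add _ _ _)
  map_smul' _ _ := Subtype.ext (map_smul _ _ _)
  left_inv x := Subtype.ext (unitaryRep_inv_apply_apply u g x)
  right_inv x := Subtype.ext (by simpa using unitaryRep_inv_apply_apply u g⁻¹ (x : H))
  norm_map' x := Unitary.norm_map (u g) x

def restrictOrthogonalInvariants :
    Γ →* unitary ((invariantSubmodule u)ᗮ →L[ℂ] (invariantSubmodule u)ᗮ) :=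
  Unitary.linearIsometryEquiv.symm.toMonoidHom.comp
    { toFun := restrictOrthogonalInvariantsEquiv u
      map_one' := LinearIsometryEquiv.ext fun x => Subtype.ext <| by
        change (u 1 : H →L[ℂ] H) x = x
        rw [map_one]; rfl
      map_mul' := fun g g' => LinearIsometryEquiv.ext fun x => Subtype.ext <|
        unitaryRep_mul_apply u g g' x }

lemma eq_zero_of_restrictOrthogonalInvariants_invariant {η : (invariantSubmodule u)ᗮ}
    (hη : ∀ g : Γ, ((restrictOrthogonalInvariants u g : unitary _) :
        (invariantSubmodule u)ᗮ →L[ℂ] (invariantSubmodule u)ᗮ) η = η) :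
    η = 0 := by
  have hηH : (η : H) ∈ invariantSubmodule u := fun g => congrArg Subtype.val (hη g)
  exact Subtype.ext ((Submodule.orthogonal_disjoint _).le_bot ⟨hηH, η.2⟩)

end Restriction

lemma IsKazhdanPair.exists_le_norm_apply_sub {Γ : Type} [Group Γ] {Q : Set Γ} {c : ℝ}
    (hQ : IsKazhdanPair Γ Q c) {H : Type} [NormedAddCommGroup H] [InnerProductSpace ℂ H]
    [CompleteSpace H] (u : Γ →* unitary (H →L[ℂ] H))
    (hu : ∀ η : H, (∀ g : Γ, (u g : H →L[ℂ] H) η = η) → η = 0) {ξ : H} (hξ : ξ ≠ 0) :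
    ∃ g ∈ Q, c * ‖ξ‖ ≤ ‖(u g : H →L[ℂ] H) ξ - ξ‖ := by
  by_contra! hsmall
  have hξpos : 0 < ‖ξ‖ := norm_pos_iff.2 hξ
  have halmost : ∀ g ∈ Q, ‖(u g : H →L[ℂ] H) ((‖ξ‖⁻¹ : ℂ) • ξ) - (‖ξ‖⁻¹ : ℂ) • ξ‖ < c := by
    intro g hg
    rw [map_smul, ← smul_sub, norm_smul, norm_inv, Complex.norm_real, norm_norm,
      inv_mul_lt_iff₀ hξpos, mul_comm]
    exact hsmall g hg
  obtain ⟨η, hη0, hηinv⟩ := hQ H u ⟨_, norm_smul_inv_norm hξ, halmost⟩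
  exact hη0 (hu η hηinv)

lemma IsKazhdanPair.exists_le_norm_apply_sub_of_mem_orthogonal {Γ : Type} [Group Γ] {Q : Set Γ}
    {c : ℝ} (hQ : IsKazhdanPair Γ Q c) {H : Type} [NormedAddCommGroup H]
    [InnerProductSpace ℂ H] [CompleteSpace H] (u : Γ →* unitary (H →L[ℂ] H)) {ξ : H}
    (hξ : ξ ∈ (invariantSubmodule u)ᗮ) (hξ0 : ξ ≠ 0) :
    ∃ g ∈ Q, c * ‖ξ‖ ≤ ‖(u g : H →L[ℂ] H) ξ - ξ‖ :=
  hQ.exists_le_norm_apply_sub (restrictOrthogonalInvariants u)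
    (fun _ => eq_zero_of_restrictOrthogonalInvariants_invariant u)
    (ξ := ⟨ξ, hξ⟩) (fun h => hξ0 (congrArg Subtype.val h))

theorem kazhdanPair_isGroupoidKazhdanSet_general (Γ : Type) [Group Γ] (S : Set Γ)
    (c : ℝ) (h : IsKazhdanPair Γ S c) :
    IsGroupoidKazhdanSet Γ S c := by
  intro H _ _ _ u ξ hξ
  rcases eq_or_ne ξ 0 with rfl | hξ0
  · exact ⟨0, by simp, by simp, by simp⟩
  obtain ⟨g, hg, hle⟩ :=
    h.exists_le_norm_apply_sub_of_mem_orthogonal u ((Submodule.mem_orthogonal _ _).2 hξ) hξ0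
  refine ⟨Finsupp.single g 1, ?_, ?_, ?_⟩ <;> simp [hg, hle]

/-- If `(S, c)` is a Kazhdan pair for a discrete group `Γ` in the classical group sense,
with `S` finite, then `S` is a groupoid-Kazhdan set with the same constant `c`. -/
theorem kazhdanPair_isGroupoidKazhdanSet (Γ : Type) [Group Γ] (S : Set Γ) (hS : S.Finite)
    (c : ℝ) (hc : 0 < c) (h : IsKazhdanPair Γ S c) :
    IsGroupoidKazhdanSet Γ S c :=
  kazhdanPair_isGroupoidKazhdanSet_general Γ S c h

end
end

section
/- A discrete group Γ has property (T) in the classical sense (there exists a Kazhdan pair (Q, c) with Q finite) if and only if there exist a finite subset K of Γ and c > 0 such that K is a groupoid-Kazhdan set with constant c. (Corollary: a discrete group has property (T) in the groupoid sense of the paper if and only if it has it in the classical sense.) -/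
/-!
If `(Q, c)` is a Kazhdan pair, restrict `u` to the orthogonal complement of its invariant
vectors: this subrepresentation has no nonzero invariant vector, so no unit vector in it is
`(Q, c)`-almost invariant. Hence every nonzero `ξ` orthogonal to the invariants is moved by at
least `c ‖ξ‖` by some `g ∈ Q`, and the Dirac mass `f = δ_g` witnesses the groupoid condition.

Conversely, if `u` has no nonzero invariant vector then every `ξ` is orthogonal to the
invariants, and `Σ f(g) u_g ξ − (Σ f(g)) ξ = Σ f(g) (u_g ξ − ξ)` has norm `< c` whenever
`‖f‖₁ ≤ 1` and `ξ` is a `(K, c)`-almost invariant unit vector.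
-/

open scoped InnerProductSpace

noncomputable section

theorem sum_smul_apply_sub_sum_smul {ι R M : Type*} [Ring R] [AddCommGroup M] [Module R M]
    (s : Finset ι) (a : ι → R) (T : ι → M → M) (x : M) :
    (∑ i ∈ s, a i • T i x) - (∑ i ∈ s, a i) • x = ∑ i ∈ s, a i • (T i x - x) := by
  simp only [smul_sub, Finset.sum_sub_distrib, Finset.sum_smul]

theorem norm_sum_smul_lt {ι 𝕜 E : Type*} [NormedField 𝕜] [SeminormedAddCommGroup E]
    [NormedSpace 𝕜 E] {s : Finset ι} {a : ι → 𝕜} {v : ι → E} {c : ℝ} (hc : 0 < c)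
    (ha : ∑ i ∈ s, ‖a i‖ ≤ 1) (hv : ∀ i ∈ s, ‖v i‖ < c) :
    ‖∑ i ∈ s, a i • v i‖ < c := by
  by_cases! hzero : ∀ i ∈ s, a i = 0
  · rwa [Finset.sum_eq_zero fun i hi => by rw [hzero i hi, zero_smul], norm_zero]
  obtain ⟨j, hj, haj⟩ := hzero
  calc ‖∑ i ∈ s, a i • v i‖
      ≤ ∑ i ∈ s, ‖a i‖ * ‖v i‖ := by
        simpa only [norm_smul] using norm_sum_le s fun i => a i • v i
    _ < ∑ i ∈ s, ‖a i‖ * c :=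
        Finset.sum_lt_sum (fun i hi => by gcongr; exact (hv i hi).le)
          ⟨j, hj, mul_lt_mul_of_pos_left (hv j hj) (norm_pos_iff.2 haj)⟩
    _ = (∑ i ∈ s, ‖a i‖) * c := Finset.sum_mul .. |>.symm
    _ ≤ c := mul_le_of_le_one_left hc.le ha

namespace UnitaryRep

open ContinuousLinearMap

variable {Γ 𝕜 H : Type*} [Group Γ] [RCLike 𝕜] [NormedAddCommGroup H]
  [InnerProductSpace 𝕜 H] [CompleteSpace H] (u : Γ →* unitary (H →L[𝕜] H))

def invariants : Submodule 𝕜 H where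
  carrier := {η | ∀ g, (u g : H →L[𝕜] H) η = η}
  add_mem' ha hb g := by simp only [map_add, ha g, hb g]
  zero_mem' g := map_zero _
  smul_mem' a x hx g := by simp only [map_smul, hx g]

theorem coe_map_inv (g : Γ) : (u g⁻¹ : H →L[𝕜] H) = adjoint (u g : H →L[𝕜] H) := by
  rw [← star_eq_adjoint, map_inv, ← Unitary.star_eq_inv, Unitary.coe_star]

theorem map_mem_invariants (g : Γ) {η : H} (hη : η ∈ invariants u) :
    (u g : H →L[𝕜] H) η ∈ invariants u := by
  rwa [hη g]

theorem map_mem_orthogonal {K : Submodule 𝕜 H}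
    (hK : ∀ g, ∀ x ∈ K, (u g : H →L[𝕜] H) x ∈ K) (g : Γ) {x : H} (hx : x ∈ Kᗮ) :
    (u g : H →L[𝕜] H) x ∈ Kᗮ :=
  ContinuousLinearMap.orthogonal_mem_invtSubmodule (by rw [← coe_map_inv]; exact hK g⁻¹) hx

theorem coe_map_mul_apply (g h : Γ) (x : H) :
    (u (g * h) : H →L[𝕜] H) x = (u g : H →L[𝕜] H) ((u h : H →L[𝕜] H) x) := by
  rw [map_mul]
  rfl

variable {u} (K : Submodule 𝕜 H) [CompleteSpace K]
  (hK : ∀ g, ∀ x ∈ K, (u g : H →L[𝕜] H) x ∈ K)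

theorem adjoint_restrict (g : Γ) :
    adjoint ((u g : H →L[𝕜] H).restrict (hK g)) =
      (u g⁻¹ : H →L[𝕜] H).restrict (hK g⁻¹) := by
  refine ((eq_adjoint_iff _ _).2 fun x y => ?_).symm
  simp only [Submodule.coe_inner, coe_restrict_apply, coe_map_inv, adjoint_inner_left]

theorem restrict_mem_unitary (g : Γ) :
    (u g : H →L[𝕜] H).restrict (hK g) ∈ unitary (K →L[𝕜] K) := by
  refine Unitary.mem_iff.2 ⟨?_, ?_⟩ <;>
    ext x <;>
    simp [star_eq_adjoint, adjoint_restrict, ← coe_map_mul_apply, -map_inv]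

def restrict : Γ →* unitary (K →L[𝕜] K) where
  toFun g := ⟨(u g : H →L[𝕜] H).restrict (hK g), restrict_mem_unitary K hK g⟩
  map_one' := by ext; simp
  map_mul' g h := by ext; simp

variable (u) in
def complInvariants : Γ →* unitary ((invariants u)ᗮ →L[𝕜] (invariants u)ᗮ) :=
  restrict _ fun g _ => map_mem_orthogonal u (fun g _ => map_mem_invariants u g) g

@[simp]
theorem coe_complInvariants_apply (g : Γ) (x : (invariants u)ᗮ) :
    ((complInvariants u g : (invariants u)ᗮ →L[𝕜] (invariants u)ᗮ) x : H) =
      (u g : H →L[𝕜] H) x :=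
  rfl

theorem eq_zero_of_forall_complInvariants_apply_eq {η : (invariants u)ᗮ}
    (hη : ∀ g, (complInvariants u g : (invariants u)ᗮ →L[𝕜] (invariants u)ᗮ) η = η) :
    η = 0 :=
  Subtype.ext <| Submodule.disjoint_def.1 (invariants u).orthogonal_disjoint _
    (fun g => congrArg Subtype.val (hη g)) η.2

end UnitaryRep

open UnitaryRep

theorem IsKazhdanPair.exists_le_norm_sub {Γ : Type} [Group Γ] {Q : Set Γ} {c : ℝ}
    (hQ : IsKazhdanPair Γ Q c) {H : Type} [NormedAddCommGroup H] [InnerProductSpace ℂ H]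
    [CompleteSpace H] (u : Γ →* unitary (H →L[ℂ] H)) {ξ : H} (hξ : ξ ∈ (invariants u)ᗮ)
    (hξ0 : ξ ≠ 0) : ∃ g ∈ Q, c * ‖ξ‖ ≤ ‖(u g : H →L[ℂ] H) ξ - ξ‖ := by
  by_contra! hsmall
  have hξpos : 0 < ‖ξ‖ := norm_pos_iff.2 hξ0
  let v : (invariants u)ᗮ := (‖ξ‖⁻¹ : ℂ) • ⟨ξ, hξ⟩
  have hv : ‖v‖ = 1 := by
    simp [v, norm_smul, hξpos.ne']
  have hvQ : ∀ g ∈ Q,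
      ‖(complInvariants u g : (invariants u)ᗮ →L[ℂ] (invariants u)ᗮ) v - v‖ < c := by
    intro g hg
    calc _ = ‖ξ‖⁻¹ * ‖(u g : H →L[ℂ] H) ξ - ξ‖ := by
          rw [← Submodule.norm_coe]; simp [v, ← smul_sub, norm_smul]
      _ < ‖ξ‖⁻¹ * (c * ‖ξ‖) := by gcongr; exact hsmall g hg
      _ = c := by field_simp
  obtain ⟨η, hη0, hη⟩ := hQ _ (complInvariants u) ⟨v, hv, hvQ⟩
  exact hη0 (eq_zero_of_forall_complInvariants_apply_eq hη)

theorem IsKazhdanPair.isGroupoidKazhdanSet {Γ : Type} [Group Γ] {Q : Set Γ} {c : ℝ}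
    (hQ : IsKazhdanPair Γ Q c) : IsGroupoidKazhdanSet Γ Q c := by
  intro H _ _ _ u ξ hξ
  obtain rfl | hξ0 := eq_or_ne ξ 0
  · exact ⟨0, by simp, by simp, by simp⟩
  obtain ⟨g, hg, hle⟩ :=
    hQ.exists_le_norm_sub u ((Submodule.mem_orthogonal _ _).2 hξ) hξ0
  exact ⟨Finsupp.single g 1, by simpa using hg, by simp, by simpa using hle⟩

theorem IsGroupoidKazhdanSet.isKazhdanPair {Γ : Type} [Group Γ] {K : Set Γ} {c : ℝ}
    (hK : IsGroupoidKazhdanSet Γ K c) (hc : 0 < c) : IsKazhdanPair Γ K c := by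
  rintro H _ _ _ u ⟨ξ, hξ1, hsmall⟩
  by_contra! hno
  have horth : ∀ η : H, (∀ g, (u g : H →L[ℂ] H) η = η) → ⟪η, ξ⟫_ℂ = 0 := by
    intro η hη
    obtain rfl | hη0 := eq_or_ne η 0
    · exact inner_zero_left ξ
    obtain ⟨g, hg⟩ := hno η hη0
    exact absurd (hη g) hg
  obtain ⟨f, hfK, hf1, hle⟩ := hK H u ξ horth
  rw [hξ1, mul_one, sum_smul_apply_sub_sum_smul] at hle
  exact hle.not_gt (norm_sum_smul_lt hc hf1 fun g hg => hsmall g (hfK hg))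

/-- A discrete group has property (T) in the classical sense (a Kazhdan pair `(Q, c)` with
`Q` finite) if and only if there exist a finite subset `K` and `c > 0` such that `K` is a
groupoid-Kazhdan set with constant `c`. -/
theorem propertyT_iff_groupoid_propertyT (Γ : Type) [Group Γ] :
    (∃ (Q : Set Γ) (c : ℝ), Q.Finite ∧ 0 < c ∧ IsKazhdanPair Γ Q c) ↔
    (∃ (K : Set Γ) (c : ℝ), K.Finite ∧ 0 < c ∧ IsGroupoidKazhdanSet Γ K c) := by
  constructor
  · rintro ⟨Q, c, hQ, hc, hKP⟩
    exact ⟨Q, c, hQ, hc, hKP.isGroupoidKazhdanSet⟩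
  · rintro ⟨K, c, hK, hc, hGK⟩
    exact ⟨K, c, hK, hc, hGK.isKazhdanPair hc⟩

end
end

section
/- Let Γ be a discrete group acting by homeomorphisms on a compact Hausdorff space X. Then there exist a complex Hilbert space H, a covariant pair (π, u) on H, and a nonzero vector ξ ∈ H with u_g ξ = ξ for all g ∈ Γ, if and only if X admits a Γ-invariant Borel probability measure. (Specialisation to transformation groupoids of: a groupoid admits a representation with nonzero constant vectors if and only if its unit space admits an invariant probability measure; constant vectors for a covariant pair are exactly the u-fixed vectors.) -/
open scoped InnerProductSpace Pointwise


noncomputable section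

/-- A covariant pair for the action of a discrete group `Γ` on a compact Hausdorff space
`X`, on a complex Hilbert space `H`: a unital *-homomorphism `π : C(X, ℂ) → B(H)` and a
unitary representation `u` of `Γ` on `H` satisfying the covariance relation
`u_g π(f) u_g⁻¹ = π(x ↦ f(g⁻¹ · x))`. -/
structure CovariantPair (Γ : Type) [Group Γ] (X : Type) [TopologicalSpace X]
    [CompactSpace X] [T2Space X] [MulAction Γ X] [ContinuousConstSMul Γ X]
    (H : Type) [NormedAddCommGroup H] [InnerProductSpace ℂ H] [CompleteSpace H] where
  π : C(X, ℂ) →⋆ₐ[ℂ] (H →L[ℂ] H)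
  u : Γ →* unitary (H →L[ℂ] H)
  covariant : ∀ (g : Γ) (f : C(X, ℂ)),
    (u g : H →L[ℂ] H) * π f * (u g⁻¹ : H →L[ℂ] H) =
      π (f.comp ⟨fun x => g⁻¹ • x, continuous_const_smul g⁻¹⟩)

/-- Property (T) for the transformation groupoid `X ⋊ Γ`, phrased via covariant pairs:
there are a finite `S ⊆ Γ` and `c > 0` such that for every covariant pair `(π, u)` and
every vector `ξ` orthogonal to the `u`-invariant vectors there is a family
`(f_g)_{g ∈ S}` in `C(X, ℂ)` with I-norm at most one and
`‖Σ_{g ∈ S} π(f_g) u_g ξ − π(Σ_{g ∈ S} f_g) ξ‖ ≥ c ‖ξ‖`. -/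
def TransPropT (Γ : Type) [Group Γ] (X : Type) [TopologicalSpace X] [CompactSpace X]
    [T2Space X] [MulAction Γ X] [ContinuousConstSMul Γ X] : Prop :=
  ∃ (S : Finset Γ) (c : ℝ), 0 < c ∧
    ∀ (H : Type) [NormedAddCommGroup H] [InnerProductSpace ℂ H] [CompleteSpace H]
      (cp : CovariantPair Γ X H) (ξ : H),
      (∀ η : H, (∀ g : Γ, (cp.u g : H →L[ℂ] H) η = η) → (inner ℂ η ξ : ℂ) = 0) →
      ∃ f : Γ → C(X, ℂ),
        (∀ x : X, ∑ g ∈ S, ‖f g x‖ ≤ 1) ∧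
        (∀ x : X, ∑ g ∈ S, ‖f g (g • x)‖ ≤ 1) ∧
        c * ‖ξ‖ ≤ ‖(∑ g ∈ S, cp.π (f g) ((cp.u g : H →L[ℂ] H) ξ)) - cp.π (∑ g ∈ S, f g) ξ‖

/-- A `Γ`-invariant Borel probability measure on `X`. -/
def InvariantProbMeasure (Γ : Type) [Group Γ] (X : Type) [TopologicalSpace X]
    [MeasurableSpace X] [MulAction Γ X] (μ : MeasureTheory.Measure X) : Prop :=
  MeasureTheory.IsProbabilityMeasure μ ∧ ∀ (g : Γ) (A : Set X), MeasurableSet A → μ (g • A) = μ A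

/-- The data of a covariant pair for the action of `Γ` on `X` together with a nonzero
vector fixed by all the unitaries `u_g`. -/
structure CovariantPairWithFixedVector (Γ : Type) [Group Γ] (X : Type) [TopologicalSpace X]
    [CompactSpace X] [T2Space X] [MulAction Γ X] [ContinuousConstSMul Γ X] : Type 1 where
  H : Type
  [instNormed : NormedAddCommGroup H]
  [instInner : InnerProductSpace ℂ H]
  [instComplete : CompleteSpace H]
  cp : CovariantPair Γ X H
  ξ : H
  ξ_ne_zero : ξ ≠ 0
  ξ_fixed : ∀ g : Γ, (cp.u g : H →L[ℂ] H) ξ = ξ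

/-!
A fixed unit vector `ξ` gives the state `f ↦ ⟪ξ, π f ξ⟫` on `C(X, ℂ)`. It is positive, and
covariance together with `u_g ξ = ξ` makes it `Γ`-invariant, so its Riesz–Markov–Kakutani
measure is an invariant probability measure: a regular measure is determined by the integrals
of continuous functions. Conversely, an invariant probability measure `μ` gives the covariant
pair on `L²(μ)` formed by multiplication operators and the Koopman representation, which fixes
the constant function `1`.
-/

open MeasureTheory
open scoped CompactlySupported ENNReal

theorem MeasureTheory.SMulInvariantMeasure.of_integral_comp_smul {Γ X : Type*} [Group Γ]
    [TopologicalSpace X] [T2Space X] [LocallyCompactSpace X] [MeasurableSpace X] [BorelSpace X]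
    [MulAction Γ X] [ContinuousConstSMul Γ X] (μ : Measure X) [μ.Regular]
    (h : ∀ (g : Γ) (f : C_c(X, ℝ)), ∫ x, f (g • x) ∂μ = ∫ x, f x ∂μ) :
    SMulInvariantMeasure Γ X μ := by
  refine ((smulInvariantMeasure_tfae Γ μ).out 0 5).2 fun g => ?_
  change μ.map (Homeomorph.smul g) = μ
  have : (μ.map (Homeomorph.smul g)).Regular := Measure.Regular.map _
  exact Measure.ext_of_integral_eq_on_compactlySupported fun f =>
    (integral_map_equiv (Homeomorph.smul g).toMeasurableEquiv f).trans (h g f)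

theorem invariantProbMeasure_iff {Γ X : Type} [Group Γ] [TopologicalSpace X] [MeasurableSpace X]
    [MulAction Γ X] [MeasurableConstSMul Γ X] (μ : Measure X) :
    InvariantProbMeasure Γ X μ ↔ IsProbabilityMeasure μ ∧ SMulInvariantMeasure Γ X μ :=
  and_congr_right fun _ => ((smulInvariantMeasure_tfae Γ μ).out 0 2).symm

section VectorState

variable {X H : Type*} [TopologicalSpace X] [NormedAddCommGroup H] [InnerProductSpace ℂ H]
  [CompleteSpace H]

open scoped ComplexOrder in
def vectorStateRe (π : C(X, ℂ) →⋆ₐ[ℂ] (H →L[ℂ] H)) (ξ : H) : C_c(X, ℝ) →ₚ[ℝ] ℝ :=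
  .mk₀
    { toFun f := RCLike.re ⟪ξ, π ((f : C(X, ℝ)).realToRCLike ℂ) ξ⟫_ℂ
      map_add' f g := by
        have : ((f + g : C_c(X, ℝ)) : C(X, ℝ)).realToRCLike ℂ =
            (f : C(X, ℝ)).realToRCLike ℂ + (g : C(X, ℝ)).realToRCLike ℂ := by ext; simp
        simp [this]
      map_smul' c f := by
        have : ((c • f : C_c(X, ℝ)) : C(X, ℝ)).realToRCLike ℂ =
            (c : ℂ) • (f : C(X, ℝ)).realToRCLike ℂ := by ext; simp
        simp [this] }
    fun f hf => by
      have hπf : 0 ≤ π ((f : C(X, ℝ)).realToRCLike ℂ) :=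
        map_nonneg π (map_nonneg (ContinuousMap.realToRCLikeStarAlgHom X ℂ) hf)
      exact ((ContinuousLinearMap.nonneg_iff_isPositive _).1 hπf).re_inner_nonneg_right ξ

@[simp]
theorem vectorStateRe_apply (π : C(X, ℂ) →⋆ₐ[ℂ] (H →L[ℂ] H)) (ξ : H) (f : C_c(X, ℝ)) :
    vectorStateRe π ξ f = RCLike.re ⟪ξ, π ((f : C(X, ℝ)).realToRCLike ℂ) ξ⟫_ℂ :=
  rfl

theorem isProbabilityMeasure_rieszMeasure_vectorStateRe [CompactSpace X] [T2Space X]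
    [MeasurableSpace X] [BorelSpace X] (π : C(X, ℂ) →⋆ₐ[ℂ] (H →L[ℂ] H)) {ξ : H}
    (hξ : ‖ξ‖ = 1) : IsProbabilityMeasure (RealRMK.rieszMeasure (vectorStateRe π ξ)) := by
  have hone : ((⟨1, .of_compactSpace _⟩ : C_c(X, ℝ)) : C(X, ℝ)).realToRCLike ℂ = 1 := by
    ext; simp
  refine ⟨(ENNReal.toReal_eq_one_iff _).1 ?_⟩
  rw [← measureReal_def]
  simpa [hone, hξ] using RealRMK.integral_rieszMeasure (vectorStateRe π ξ) ⟨1, .of_compactSpace _⟩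

end VectorState

namespace CovariantPair

variable {Γ X H : Type} [Group Γ] [TopologicalSpace X] [CompactSpace X] [T2Space X]
  [MulAction Γ X] [ContinuousConstSMul Γ X] [NormedAddCommGroup H] [InnerProductSpace ℂ H]
  [CompleteSpace H] (cp : CovariantPair Γ X H) {ξ : H}

theorem inner_π_comp_inv_smul (hξ : ∀ g, (cp.u g : H →L[ℂ] H) ξ = ξ) (g : Γ) (f : C(X, ℂ)) :
    ⟪ξ, cp.π (f.comp ⟨fun x => g⁻¹ • x, continuous_const_smul g⁻¹⟩) ξ⟫_ℂ = ⟪ξ, cp.π f ξ⟫_ℂ := by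
  rw [← cp.covariant, mul_apply_eq_comp, mul_apply_eq_comp, hξ]
  calc _ = ⟪(cp.u g : H →L[ℂ] H) ξ, (cp.u g : H →L[ℂ] H) (cp.π f ξ)⟫_ℂ := by rw [hξ]
    _ = _ := Unitary.inner_map_map (cp.u g) ξ (cp.π f ξ)

theorem smulInvariantMeasure_rieszMeasure [MeasurableSpace X] [BorelSpace X]
    (hξ : ∀ g, (cp.u g : H →L[ℂ] H) ξ = ξ) :
    SMulInvariantMeasure Γ X (RealRMK.rieszMeasure (vectorStateRe cp.π ξ)) := by
  refine .of_integral_comp_smul _ fun g f => ?_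
  refine (RealRMK.integral_rieszMeasure _ (f.comp (Homeomorph.smul g).toCocompactMap)).trans
    (.trans ?_ (RealRMK.integral_rieszMeasure _ f).symm)
  -- `g = g⁻¹⁻¹` puts the translate in the shape of the covariance relation for `g⁻¹`.
  have hcomp : ((f.comp (Homeomorph.smul g).toCocompactMap : C_c(X, ℝ)) : C(X, ℝ)).realToRCLike ℂ =
      ((f : C(X, ℝ)).realToRCLike ℂ).comp ⟨fun x => g⁻¹⁻¹ • x, continuous_const_smul _⟩ := by
    ext; simp
  rw [vectorStateRe_apply, vectorStateRe_apply, hcomp, cp.inner_π_comp_inv_smul hξ]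

end CovariantPair

section MultiplicationOperator

variable {X : Type*} [TopologicalSpace X] [CompactSpace X] [MeasurableSpace X] [BorelSpace X]
  (μ : Measure X) [IsFiniteMeasure μ]

def ContinuousMap.mulL2 (f : C(X, ℂ)) : Lp ℂ 2 μ →L[ℂ] Lp ℂ 2 μ :=
  LinearMap.mkContinuous
    { toFun g := (ContinuousMap.toLp ∞ μ ℂ f • g : Lp ℂ 2 μ)
      map_add' := Lp.add_smul _
      map_smul' c g := (Lp.smul_comm c _ g).symm }
    ‖ContinuousMap.toLp ∞ μ ℂ f‖ fun g => Lp.norm_smul_le _ g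

theorem ContinuousMap.mulL2_apply (f : C(X, ℂ)) (g : Lp ℂ 2 μ) :
    f.mulL2 μ g = (ContinuousMap.toLp ∞ μ ℂ f • g : Lp ℂ 2 μ) :=
  rfl

theorem ContinuousMap.coeFn_mulL2 (f : C(X, ℂ)) (g : Lp ℂ 2 μ) :
    f.mulL2 μ g =ᵐ[μ] fun x => f x * g x := by
  filter_upwards [Lp.coeFn_lpSMul (r := 2) (ContinuousMap.toLp ∞ μ ℂ f) g,
    ContinuousMap.coeFn_toLp (p := ∞) μ (𝕜 := ℂ) f] with x h₁ h₂
  rw [← smul_eq_mul, ← h₂]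
  exact h₁

theorem ContinuousMap.mulL2_one : (1 : C(X, ℂ)).mulL2 μ = 1 :=
  ContinuousLinearMap.ext fun g => Lp.ext <| by
    filter_upwards [coeFn_mulL2 μ 1 g] with x hx
    simpa using hx

def ContinuousMap.mulL2StarAlgHom : C(X, ℂ) →⋆ₐ[ℂ] (Lp ℂ 2 μ →L[ℂ] Lp ℂ 2 μ) where
  toFun f := f.mulL2 μ
  map_one' := mulL2_one μ
  map_mul' f₁ f₂ := ContinuousLinearMap.ext fun g => Lp.ext <| by
    filter_upwards [coeFn_mulL2 μ (f₁ * f₂) g, coeFn_mulL2 μ f₂ g,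
      coeFn_mulL2 μ f₁ (f₂.mulL2 μ g)] with x h h₂ h₁
    simp [mul_apply_eq_comp, h, h₁, h₂, mul_assoc]
  map_zero' := by ext1 g; simp [mulL2_apply]
  map_add' f₁ f₂ := by ext1 g; simp [mulL2_apply, Lp.smul_add]
  commutes' c := by
    ext1 g
    simp only [Algebra.algebraMap_eq_smul_one, mulL2_apply, map_smul, Lp.smul_assoc]
    rw [← mulL2_apply, mulL2_one]
    rfl
  map_star' f := by
    refine ((ContinuousLinearMap.eq_adjoint_iff _ _).2 fun g₁ g₂ => ?_)
    simp only [L2.inner_def]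
    refine integral_congr_ae ?_
    filter_upwards [coeFn_mulL2 μ (star f) g₁, coeFn_mulL2 μ f g₂] with x h₁ h₂
    simp [h₁, h₂]
    ring

end MultiplicationOperator

section Koopman

variable {𝕜 E Γ X : Type*} [RCLike 𝕜] [NormedAddCommGroup E] [InnerProductSpace 𝕜 E]
  [CompleteSpace E] [Group Γ] [MeasurableSpace X] [MulAction Γ X] [MeasurableConstSMul Γ X]
  (μ : Measure X) [SMulInvariantMeasure Γ X μ]

variable (𝕜 E) in
-- `(DomMulAct.mk g)⁻¹` acts on `L²(μ)` by `h ↦ h(g⁻¹ • ·)`.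
def koopmanRep : Γ →* unitary (Lp E 2 μ →L[𝕜] Lp E 2 μ) :=
  Unitary.linearIsometryEquiv.symm.toMonoidHom.comp
    { toFun g :=
        { DistribMulAction.toLinearEquiv 𝕜 (Lp E 2 μ) (DomMulAct.mk g)⁻¹ with
          norm_map' := DomMulAct.norm_smul_Lp _ }
      map_one' := by ext1; simp
      map_mul' g₁ g₂ := by
        ext1 h
        change _ = (DomMulAct.mk g₁)⁻¹ • (DomMulAct.mk g₂)⁻¹ • h
        simp [DomMulAct.mk_mul, mul_smul] }

theorem koopmanRep_apply (g : Γ) (h : Lp E 2 μ) :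
    (koopmanRep 𝕜 E μ g : Lp E 2 μ →L[𝕜] Lp E 2 μ) h = (DomMulAct.mk g)⁻¹ • h :=
  rfl

theorem coeFn_koopmanRep (g : Γ) (h : Lp E 2 μ) :
    (koopmanRep 𝕜 E μ g : Lp E 2 μ →L[𝕜] Lp E 2 μ) h =ᵐ[μ] fun x => h (g⁻¹ • x) :=
  DomMulAct.smul_Lp_ae_eq _ h

end Koopman

section KoopmanCovariance

variable {Γ X : Type*} [Group Γ] [TopologicalSpace X] [CompactSpace X] [MeasurableSpace X]
  [BorelSpace X] [MulAction Γ X] [ContinuousConstSMul Γ X]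
  (μ : Measure X) [IsFiniteMeasure μ] [SMulInvariantMeasure Γ X μ]

theorem koopmanRep_mulL2 (g : Γ) (f : C(X, ℂ)) (h : Lp ℂ 2 μ) :
    (koopmanRep ℂ ℂ μ g : Lp ℂ 2 μ →L[ℂ] Lp ℂ 2 μ) (f.mulL2 μ h) =
      (f.comp ⟨fun x => g⁻¹ • x, continuous_const_smul g⁻¹⟩).mulL2 μ
        ((koopmanRep ℂ ℂ μ g : Lp ℂ 2 μ →L[ℂ] Lp ℂ 2 μ) h) := by
  refine Lp.ext ?_
  filter_upwards [coeFn_koopmanRep (𝕜 := ℂ) μ g (f.mulL2 μ h),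
    (f.coeFn_mulL2 μ h).comp_tendsto (tendsto_smul_ae μ g⁻¹),
    ContinuousMap.coeFn_mulL2 μ _ _, coeFn_koopmanRep (𝕜 := ℂ) μ g h] with x h₁ h₂ h₃ h₄
  rw [h₁, h₃, h₄]
  exact h₂

theorem koopmanRep_mul_mulL2_mul_koopmanRep_inv (g : Γ) (f : C(X, ℂ)) :
    (koopmanRep ℂ ℂ μ g : Lp ℂ 2 μ →L[ℂ] Lp ℂ 2 μ) * f.mulL2 μ *
        (koopmanRep ℂ ℂ μ g⁻¹ : Lp ℂ 2 μ →L[ℂ] Lp ℂ 2 μ) =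
      (f.comp ⟨fun x => g⁻¹ • x, continuous_const_smul g⁻¹⟩).mulL2 μ := by
  ext1 h
  rw [mul_apply_eq_comp, mul_apply_eq_comp, koopmanRep_mulL2]
  congr 1
  rw [koopmanRep_apply, koopmanRep_apply, DomMulAct.mk_inv, inv_inv, inv_smul_smul]

end KoopmanCovariance

def koopmanCovariantPair (Γ X : Type) [Group Γ] [TopologicalSpace X] [CompactSpace X]
    [T2Space X] [MeasurableSpace X] [BorelSpace X] [MulAction Γ X] [ContinuousConstSMul Γ X]
    (μ : Measure X) [IsFiniteMeasure μ] [SMulInvariantMeasure Γ X μ] :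
    CovariantPair Γ X (Lp ℂ 2 μ) where
  π := ContinuousMap.mulL2StarAlgHom μ
  u := koopmanRep ℂ ℂ μ
  covariant := koopmanRep_mul_mulL2_mul_koopmanRep_inv μ

/-- There exist a Hilbert space `H`, a covariant pair `(π, u)` on `H`, and a nonzero
vector `ξ ∈ H` with `u_g ξ = ξ` for all `g ∈ Γ`, if and only if `X` admits a
`Γ`-invariant Borel probability measure. -/
theorem exists_fixed_vector_iff_invariant_measure (Γ : Type) [Group Γ] (X : Type)
    [TopologicalSpace X] [CompactSpace X] [T2Space X] [MulAction Γ X]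
    [ContinuousConstSMul Γ X] [MeasurableSpace X] [BorelSpace X] :
    Nonempty (CovariantPairWithFixedVector Γ X) ↔
      ∃ μ : MeasureTheory.Measure X, InvariantProbMeasure Γ X μ := by
  constructor
  · rintro ⟨H, cp, ξ, hξ, hfix⟩
    set ξ₁ : H := (‖ξ‖⁻¹ : ℂ) • ξ
    have hξ₁ : ‖ξ₁‖ = 1 := by simp [ξ₁, norm_smul, hξ]
    have hfix₁ : ∀ g, (cp.u g : H →L[ℂ] H) ξ₁ = ξ₁ := by simp [ξ₁, hfix]
    exact ⟨_, (invariantProbMeasure_iff _).2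
      ⟨isProbabilityMeasure_rieszMeasure_vectorStateRe cp.π hξ₁,
        cp.smulInvariantMeasure_rieszMeasure hfix₁⟩⟩
  · rintro ⟨μ, hμ⟩
    obtain ⟨_, _⟩ := (invariantProbMeasure_iff μ).1 hμ
    have hne : Lp.const 2 μ (1 : ℂ) ≠ 0 := by
      rw [← norm_ne_zero_iff, Lp.norm_const (p := 2) (μ := μ) (c := (1 : ℂ)) two_ne_zero]
      simp
    exact ⟨⟨Lp ℂ 2 μ, koopmanCovariantPair Γ X μ, Lp.const 2 μ 1, hne,
      fun g => DomMulAct.smul_Lp_const _ _⟩⟩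

end
end

section
/- Let Γ be a discrete group acting by homeomorphisms on a compact Hausdorff space X, and let μ be a Γ-invariant Borel probability measure on X. Then for every unitary representation (H, u) of Γ there exist a complex Hilbert space H′, a covariant pair (π′, u′) on H′, and a linear isometry V : H → H′ such that V u_g = u′_g V for all g ∈ Γ. (Key step in the proof that, in the presence of an invariant probability measure, property (T) with respect to representations arising from covariant pairs is equivalent to property (T): every unitary representation of Γ is a subrepresentation of the group part of a covariant pair.) -/
open scoped InnerProductSpace Pointwise

noncomputable section

/-- The data of a covariant pair `(π′, u′)` on a Hilbert space `H′` together with a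
linear isometry `V : H → H′` intertwining a given unitary representation `u` of `Γ` on
`H` with `u′`. -/
structure CovariantDilation (Γ : Type) [Group Γ] (X : Type) [TopologicalSpace X]
    [CompactSpace X] [T2Space X] [MulAction Γ X] [ContinuousConstSMul Γ X]
    (H : Type) [NormedAddCommGroup H] [InnerProductSpace ℂ H] [CompleteSpace H]
    (u : Γ →* unitary (H →L[ℂ] H)) : Type 1 where
  H' : Type
  [instNormed : NormedAddCommGroup H']
  [instInner : InnerProductSpace ℂ H']
  [instComplete : CompleteSpace H']
  cp : CovariantPair Γ X H'
  V : H →ₗᵢ[ℂ] H'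
  intertwine : ∀ (g : Γ) (ξ : H), V ((u g : H →L[ℂ] H) ξ) = (cp.u g : H' →L[ℂ] H') (V ξ)

/-!
Take `H' = L²(X, μ; H)`, on which `C(X, ℂ)` acts by pointwise multiplication and `Γ` by
`(U_g ξ)(x) = u_g (ξ (g⁻¹ • x))`, the Koopman representation of the action on `(X, μ)` tensored
with `u`. Invariance of `μ` makes each `U_g` an invertible isometry, hence unitary, and the
covariance relation holds pointwise. Since `μ` is a probability measure, the constant functions
embed `H` isometrically into `L²(X, μ; H)`, and `U_g` sends the constant `ξ` to the constant
`u_g ξ`.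
-/

open MeasureTheory

theorem ContinuousLinearMap.mem_unitary_of_isUnit_of_norm_map {𝕜 E : Type*} [RCLike 𝕜]
    [NormedAddCommGroup E] [InnerProductSpace 𝕜 E] [CompleteSpace E] {U : E →L[𝕜] E}
    (hU : IsUnit U) (hnorm : ∀ x, ‖U x‖ = ‖x‖) : U ∈ unitary (E →L[𝕜] E) :=
  hU.mem_unitary_of_star_mul_self <| by
    rw [star_eq_adjoint]
    exact (norm_map_iff_adjoint_comp_self U).mp hnorm

theorem ContinuousMap.memLp_top {X E : Type*} [TopologicalSpace X] [CompactSpace X]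
    [MeasurableSpace X] [BorelSpace X] [NormedAddCommGroup E]
    [SecondCountableTopologyEither X E] (μ : Measure X) (f : C(X, E)) :
    MemLp f ⊤ μ :=
  (BoundedContinuousFunction.mkOfCompact f).memLp_top

theorem ContinuousMap.norm_toLp_top_le {X E : Type*} [TopologicalSpace X] [CompactSpace X]
    [MeasurableSpace X] [BorelSpace X] [NormedAddCommGroup E]
    [SecondCountableTopologyEither X E] (μ : Measure X) (f : C(X, E)) :
    ‖(f.memLp_top μ).toLp f‖ ≤ ‖f‖ := by
  rw [Lp.norm_toLp, eLpNorm_exponent_top]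
  exact ENNReal.toReal_le_of_le_ofReal (norm_nonneg f)
    (eLpNormEssSup_le_of_ae_bound (.of_forall f.norm_coe_le_norm))

theorem ContinuousLinearMap.norm_compLp_of_norm_map {α 𝕜 E F : Type*} [MeasurableSpace α]
    {μ : Measure α} {p : ENNReal} [NontriviallyNormedField 𝕜] [NormedAddCommGroup E]
    [NormedSpace 𝕜 E] [NormedAddCommGroup F] [NormedSpace 𝕜 F] (L : E →L[𝕜] F)
    (hL : ∀ x, ‖L x‖ = ‖x‖) (f : Lp E p μ) : ‖L.compLp f‖ = ‖f‖ := by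
  rw [Lp.norm_def, Lp.norm_def, eLpNorm_congr_ae (L.coeFn_compLp' f)]
  exact congrArg ENNReal.toReal (eLpNorm_congr_norm_ae (.of_forall fun x => hL (f x)))

theorem Filter.EventuallyEq.comp_smul {Γ X E : Type*} [Group Γ] [MulAction Γ X]
    [MeasurableSpace X] [MeasurableConstSMul Γ X] {μ : Measure X} [SMulInvariantMeasure Γ X μ]
    {f f' : X → E} (h : f =ᵐ[μ] f') (g : Γ) :
    (fun x => f (g • x)) =ᵐ[μ] fun x => f' (g • x) :=
  (measurePreserving_smul g μ).quasiMeasurePreserving.ae_eq_comp h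

theorem InvariantProbMeasure.smulInvariantMeasure {Γ X : Type} [Group Γ] [TopologicalSpace X]
    [MeasurableSpace X] [MulAction Γ X] {μ : Measure X}
    (hμ : InvariantProbMeasure Γ X μ) : SMulInvariantMeasure Γ X μ :=
  ⟨fun g A hA => by rw [Set.preimage_smul]; exact hμ.2 g⁻¹ A hA⟩

namespace MeasureTheory.L2

section Multiplication

variable {X : Type*} [TopologicalSpace X] [CompactSpace X] [MeasurableSpace X] [BorelSpace X]
  (μ : Measure X) (H : Type*) [NormedAddCommGroup H] [InnerProductSpace ℂ H]

def mulCLM (f : C(X, ℂ)) : Lp H 2 μ →L[ℂ] Lp H 2 μ :=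
  LinearMap.mkContinuous
    { toFun := fun ξ => ((f.memLp_top μ).toLp f • ξ : Lp H 2 μ)
      map_add' := fun ξ η => Lp.add_smul (r := 2) _ ξ η
      map_smul' := fun c ξ => (Lp.smul_comm (r := 2) c _ ξ).symm }
    ‖f‖ fun ξ => (Lp.norm_smul_le (r := 2) _ ξ).trans
      (mul_le_mul_of_nonneg_right (f.norm_toLp_top_le μ) (norm_nonneg ξ))

variable {μ H}

theorem coeFn_mulCLM (f : C(X, ℂ)) (ξ : Lp H 2 μ) :
    mulCLM μ H f ξ =ᵐ[μ] fun x => f x • ξ x := by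
  filter_upwards [Lp.coeFn_lpSMul (r := 2) ((f.memLp_top μ).toLp f) ξ,
    (f.memLp_top μ).coeFn_toLp] with x hx hf
  rw [mulCLM, LinearMap.mkContinuous_apply, LinearMap.coe_mk, AddHom.coe_mk, hx, Pi.smul_apply', hf]

theorem adjoint_mulCLM [CompleteSpace H] (f : C(X, ℂ)) :
    ContinuousLinearMap.adjoint (mulCLM μ H f) = mulCLM μ H (star f) := by
  refine ((ContinuousLinearMap.eq_adjoint_iff _ _).mpr fun ξ η => ?_).symm
  rw [inner_def, inner_def]
  refine integral_congr_ae ?_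
  filter_upwards [coeFn_mulCLM (star f) ξ, coeFn_mulCLM f η] with x hξ hη
  simp [hξ, hη, inner_smul_left, inner_smul_right]

variable (μ H) in
def mulRep [CompleteSpace H] : C(X, ℂ) →⋆ₐ[ℂ] (Lp H 2 μ →L[ℂ] Lp H 2 μ) where
  toFun := mulCLM μ H
  map_one' := by
    ext ξ : 1
    refine Lp.ext ?_
    filter_upwards [coeFn_mulCLM (μ := μ) 1 ξ] with x hx
    simp [hx]
  map_mul' f g := by
    ext ξ : 1
    refine Lp.ext ?_
    filter_upwards [coeFn_mulCLM (f * g) ξ, coeFn_mulCLM f (mulCLM μ H g ξ),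
      coeFn_mulCLM g ξ] with x hfg hf hg
    simp [hfg, hf, hg, mul_smul]
  map_zero' := by
    ext ξ : 1
    refine Lp.ext ?_
    rw [zero_apply (F := Lp H 2 μ →L[ℂ] Lp H 2 μ)]
    filter_upwards [coeFn_mulCLM (μ := μ) 0 ξ, Lp.coeFn_zero H 2 μ] with x hx h0
    rw [hx, h0, ContinuousMap.zero_apply, zero_smul, Pi.zero_apply]
  map_add' f g := by
    ext ξ : 1
    refine Lp.ext ?_
    rw [add_apply (F := Lp H 2 μ →L[ℂ] Lp H 2 μ)]
    filter_upwards [coeFn_mulCLM (f + g) ξ, coeFn_mulCLM f ξ, coeFn_mulCLM g ξ,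
      Lp.coeFn_add (mulCLM μ H f ξ) (mulCLM μ H g ξ)] with x hfg hf hg hadd
    rw [hfg, hadd, Pi.add_apply, hf, hg, ContinuousMap.add_apply, add_smul]
  commutes' c := by
    ext ξ : 1
    refine Lp.ext ?_
    rw [Algebra.algebraMap_eq_smul_one (A := Lp H 2 μ →L[ℂ] Lp H 2 μ),
      smul_apply (F := Lp H 2 μ →L[ℂ] Lp H 2 μ),
      one_apply_eq_self (F := Lp H 2 μ →L[ℂ] Lp H 2 μ)]
    filter_upwards [coeFn_mulCLM (μ := μ) (algebraMap ℂ C(X, ℂ) c) ξ, Lp.coeFn_smul c ξ]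
      with x hx hc
    rw [hx, hc, Algebra.algebraMap_eq_smul_one, ContinuousMap.smul_apply, ContinuousMap.one_apply,
      smul_one_smul, Pi.smul_apply]
  map_star' f := by
    rw [ContinuousLinearMap.star_eq_adjoint, adjoint_mulCLM]

end Multiplication

section TwistedKoopman

variable {Γ X : Type*} [Group Γ] [MulAction Γ X] [MeasurableSpace X] [MeasurableConstSMul Γ X]
  (μ : Measure X) [SMulInvariantMeasure Γ X μ]
  {H : Type*} [NormedAddCommGroup H] [InnerProductSpace ℂ H] [CompleteSpace H]
  (u : Γ →* unitary (H →L[ℂ] H))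

def twistedKoopmanOp (g : Γ) : Lp H 2 μ →L[ℂ] Lp H 2 μ :=
  (u g : H →L[ℂ] H).compLpL 2 μ ∘L
    (Lp.compMeasurePreservingₗᵢ ℂ (g⁻¹ • ·) (measurePreserving_smul g⁻¹ μ)).toContinuousLinearMap

variable {μ u}

theorem coeFn_twistedKoopmanOp (g : Γ) (ξ : Lp H 2 μ) :
    twistedKoopmanOp μ u g ξ =ᵐ[μ] fun x => (u g : H →L[ℂ] H) (ξ (g⁻¹ • x)) := by
  have hg := measurePreserving_smul g⁻¹ μ
  filter_upwards [(u g : H →L[ℂ] H).coeFn_compLp' (Lp.compMeasurePreserving _ hg ξ),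
    Lp.coeFn_compMeasurePreserving ξ hg] with x hu hξ
  rw [Function.comp_apply] at hξ
  exact hu.trans (congrArg _ hξ)

theorem norm_twistedKoopmanOp (g : Γ) (ξ : Lp H 2 μ) : ‖twistedKoopmanOp μ u g ξ‖ = ‖ξ‖ :=
  ((u g : H →L[ℂ] H).norm_compLp_of_norm_map (Unitary.norm_map (u g)) _).trans
    (Lp.norm_compMeasurePreserving ξ _)

theorem twistedKoopmanOp_one : twistedKoopmanOp μ u 1 = 1 := by
  ext ξ : 1
  refine Lp.ext ?_
  filter_upwards [coeFn_twistedKoopmanOp (u := u) 1 ξ] with x hx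
  rw [hx, inv_one, one_smul, map_one, OneMemClass.coe_one, one_apply_eq_self, one_apply_eq_self]

theorem twistedKoopmanOp_mul (g h : Γ) :
    twistedKoopmanOp μ u (g * h) = twistedKoopmanOp μ u g * twistedKoopmanOp μ u h := by
  ext ξ : 1
  refine Lp.ext ?_
  filter_upwards [coeFn_twistedKoopmanOp (u := u) (g * h) ξ,
    coeFn_twistedKoopmanOp g (twistedKoopmanOp μ u h ξ),
    (coeFn_twistedKoopmanOp h ξ).comp_smul g⁻¹] with x hgh hg hh
  rw [mul_apply_eq_comp, hgh, hg, hh, mul_inv_rev, mul_smul, map_mul, MulMemClass.coe_mul,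
    mul_apply_eq_comp]

variable (μ u) in
def twistedKoopmanRep : Γ →* unitary (Lp H 2 μ →L[ℂ] Lp H 2 μ) :=
  let ρ : Γ →* (Lp H 2 μ →L[ℂ] Lp H 2 μ) :=
    ⟨⟨twistedKoopmanOp μ u, twistedKoopmanOp_one⟩, twistedKoopmanOp_mul⟩
  ρ.codRestrict _ fun g => ContinuousLinearMap.mem_unitary_of_isUnit_of_norm_map
    ((Group.isUnit g).map ρ) (norm_twistedKoopmanOp g)

end TwistedKoopman

section Covariance

variable {Γ X : Type*} [Group Γ] [TopologicalSpace X] [CompactSpace X] [MeasurableSpace X]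
  [BorelSpace X] [MulAction Γ X] [ContinuousConstSMul Γ X] {μ : Measure X}
  [SMulInvariantMeasure Γ X μ] {H : Type*} [NormedAddCommGroup H] [InnerProductSpace ℂ H]
  [CompleteSpace H] {u : Γ →* unitary (H →L[ℂ] H)}

theorem twistedKoopmanOp_mul_mulCLM (g : Γ) (f : C(X, ℂ)) :
    twistedKoopmanOp μ u g * mulCLM μ H f =
      mulCLM μ H (f.comp ⟨(g⁻¹ • ·), continuous_const_smul g⁻¹⟩) * twistedKoopmanOp μ u g := by
  ext ξ : 1
  refine Lp.ext ?_
  filter_upwards [coeFn_twistedKoopmanOp g (mulCLM μ H f ξ),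
    (coeFn_mulCLM f ξ).comp_smul g⁻¹, coeFn_mulCLM _ (twistedKoopmanOp μ u g ξ),
    coeFn_twistedKoopmanOp g ξ] with x hUf hf hfU hU
  rw [mul_apply_eq_comp, mul_apply_eq_comp, hUf, hf, hfU, hU, map_smul]
  rfl

end Covariance

section CovariantPair

variable {Γ X : Type} [Group Γ] [TopologicalSpace X] [CompactSpace X] [T2Space X]
  [MeasurableSpace X] [BorelSpace X] [MulAction Γ X] [ContinuousConstSMul Γ X]
  (μ : Measure X) [SMulInvariantMeasure Γ X μ]
  {H : Type} [NormedAddCommGroup H] [InnerProductSpace ℂ H] [CompleteSpace H]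
  (u : Γ →* unitary (H →L[ℂ] H))

def covariantPair : CovariantPair Γ X (Lp H 2 μ) where
  π := mulRep μ H
  u := twistedKoopmanRep μ u
  covariant g f := by
    change twistedKoopmanOp μ u g * mulCLM μ H f * twistedKoopmanOp μ u g⁻¹ = _
    rw [twistedKoopmanOp_mul_mulCLM, mul_assoc, ← twistedKoopmanOp_mul, mul_inv_cancel,
      twistedKoopmanOp_one, mul_one]
    rfl

end CovariantPair

section Constants

variable {X : Type*} [MeasurableSpace X] (μ : Measure X) [IsProbabilityMeasure μ]
  (H : Type*) [NormedAddCommGroup H] [InnerProductSpace ℂ H]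

def constₗᵢ : H →ₗᵢ[ℂ] Lp H 2 μ where
  toLinearMap := Lp.constₗ 2 μ ℂ
  norm_map' ξ := by
    rw [Lp.constₗ_apply, Lp.norm_const 2 μ ξ two_ne_zero, probReal_univ,
      Real.one_rpow, mul_one]

variable {μ H}

theorem twistedKoopmanOp_const {Γ : Type*} [Group Γ] [MulAction Γ X] [MeasurableConstSMul Γ X]
    [SMulInvariantMeasure Γ X μ] [CompleteSpace H] (u : Γ →* unitary (H →L[ℂ] H)) (g : Γ)
    (ξ : H) : twistedKoopmanOp μ u g (Lp.const 2 μ ξ) = Lp.const 2 μ ((u g : H →L[ℂ] H) ξ) := by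
  refine Lp.ext ?_
  filter_upwards [coeFn_twistedKoopmanOp g (Lp.const 2 μ ξ),
    (Lp.coeFn_const (p := 2) (μ := μ) ξ).comp_smul g⁻¹,
    Lp.coeFn_const (p := 2) (μ := μ) ((u g : H →L[ℂ] H) ξ)] with x hU hξ huξ
  rw [hU, hξ, huξ, Function.const_apply, Function.const_apply]

end Constants

end MeasureTheory.L2

/-- If `X` carries a `Γ`-invariant Borel probability measure, then every unitary
representation of `Γ` embeds isometrically and equivariantly into the group part of a
covariant pair. -/
theorem every_rep_embeds_in_covariant_pair (Γ : Type) [Group Γ] (X : Type)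
    [TopologicalSpace X] [CompactSpace X] [T2Space X] [MulAction Γ X]
    [ContinuousConstSMul Γ X] [MeasurableSpace X] [BorelSpace X]
    (μ : MeasureTheory.Measure X) (hμ : InvariantProbMeasure Γ X μ)
    (H : Type) [NormedAddCommGroup H] [InnerProductSpace ℂ H] [CompleteSpace H]
    (u : Γ →* unitary (H →L[ℂ] H)) :
    Nonempty (CovariantDilation Γ X H u) := by
  have := hμ.1
  have := hμ.smulInvariantMeasure
  exact ⟨{ H' := Lp H 2 μ
           cp := L2.covariantPair μ u
           V := L2.constₗᵢ μ H
           intertwine := fun g ξ => (L2.twistedKoopmanOp_const u g ξ).symm }⟩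

end
end
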